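/- arXiv:math/0301013 — 4 statements merged into one kernel-verified Lean document; each statement's English description precedes it below -/
import Mathlib

section
/- Let H be the subgroup of S_n given as the image of the embedding e_φ: S_1^{j_1} × ⋯ × S_n^{j_n} → S_n associated to a partition of {1,…,n} into j_i blocks of size i (with Σ i·j_i = n). Then the normalizer N(H) of H in S_n is isomorphic to ∏_i (S_i ≀ S_{j_i}) (the product of wreath products), and the quotient N(H)/H is isomorphic to S_{j_1} × S_{j_2} × ⋯ × S_{j_n}. -/
/-- The type of `Σᵢ i·jᵢ` elements, partitioned into `j i` blocks of size `i`
(here the block sizes are `i+1` for `i : Fin N`, so that all sizes are positive). -/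
def BlockType (N : ℕ) (j : Fin N → ℕ) : Type :=
  Σ i : Fin N, Fin (j i) × Fin (i.1 + 1)

/-- The subgroup `H = Im(e_φ) ≅ ∏ᵢ Sᵢ^{jᵢ}` of the symmetric group of the partitioned set,
consisting of the permutations preserving each block. -/
def blockSubgroup (N : ℕ) (j : Fin N → ℕ) : Subgroup (Equiv.Perm (BlockType N j)) where
  carrier := {σ | ∀ b : BlockType N j, (σ b).1 = b.1 ∧ ((σ b).2.1 : ℕ) = b.2.1}
  one_mem' := by intro b; simp
  mul_mem' := by
    intro σ τ hσ hτ b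
    have h1 := hτ b
    have h2 := hσ (τ b)
    simp only [Equiv.Perm.mul_apply]
    exact ⟨h2.1.trans h1.1, h2.2.trans h1.2⟩
  inv_mem' := by
    intro σ hσ b
    obtain ⟨h1, h2⟩ := hσ (σ⁻¹ b)
    rw [show σ (σ⁻¹ b) = b from σ.apply_symm_apply b] at h1 h2
    exact ⟨h1.symm, h2.symm⟩

/-- The permutation action of `Equiv.Perm ι` on `ι → G` by automorphisms. -/
def permMulAut (G ι : Type) [Group G] : Equiv.Perm ι →* MulAut (ι → G) where
  toFun σ :=
    { toFun := fun f => f ∘ ⇑σ⁻¹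
      invFun := fun f => f ∘ ⇑σ
      left_inv := fun f => by funext i; simp
      right_inv := fun f => by funext i; simp
      map_mul' := fun f g => rfl }
  map_one' := by ext f i; simp
  map_mul' := fun σ τ => by ext f i; simp

/-!
`H` is the stabilizer of every block and contains the transposition of any two points of a block,
so a permutation normalizes `H` exactly when it maps blocks onto blocks. Such a permutation maps each
block onto a block of the same size, so it acts separately on the union of the `jᵢ` blocks of size
`i`, a product `Fin jᵢ × Fin i` whose rows are the blocks. A permutation of that product mapping rows
to rows is a permutation of the rows together with a permutation inside each row, i.e. an element of
`Sᵢ ≀ S_{jᵢ}`. Remembering only the permutation of the rows gives the map to `∏ᵢ S_{jᵢ}`; its kernel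
is `H`.
-/

namespace Equiv.Perm

variable {α β : Type*}

def fiberStabilizer (f : α → β) : Subgroup (Perm α) where
  carrier := {σ | ∀ a, f (σ a) = f a}
  one_mem' _ := rfl
  mul_mem' hσ hτ a := (hσ _).trans (hτ a)
  inv_mem' {σ} hσ a := by simpa using (hσ (σ⁻¹ a)).symm

def fiberPreserving (f : α → β) : Subgroup (Perm α) where
  carrier := {σ | ∀ a a', f (σ a) = f (σ a') ↔ f a = f a'}
  one_mem' _ _ := Iff.rfl
  mul_mem' hσ hτ a a' := (hσ _ _).trans (hτ a a')
  inv_mem' {σ} hσ a a' := by simpa using (hσ (σ⁻¹ a) (σ⁻¹ a')).symm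

variable {f : α → β} {σ : Perm α}

theorem mem_fiberStabilizer : σ ∈ fiberStabilizer f ↔ ∀ a, f (σ a) = f a := Iff.rfl

theorem mem_fiberPreserving :
    σ ∈ fiberPreserving f ↔ ∀ a a', f (σ a) = f (σ a') ↔ f a = f a' :=
  Iff.rfl

theorem swap_mem_fiberStabilizer [DecidableEq α] {a a' : α} (h : f a = f a') :
    swap a a' ∈ fiberStabilizer f := by
  intro c
  rw [swap_apply_def]
  split_ifs <;> simp_all

theorem normalizer_fiberStabilizer (f : α → β) :
    Subgroup.normalizer (fiberStabilizer f : Set (Perm α)) = fiberPreserving f := by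
  classical
  ext σ
  constructor
  · have map_fiber : ∀ τ ∈ Subgroup.normalizer (fiberStabilizer f : Set (Perm α)),
        ∀ a a', f a = f a' → f (τ a) = f (τ a') := fun τ hτ a a' h => by
      simpa using
        ((Subgroup.mem_normalizer_iff.mp hτ _).mp (swap_mem_fiberStabilizer h) (τ a)).symm
    intro hσ a a'
    exact ⟨fun h => by simpa using map_fiber _ (inv_mem hσ) _ _ h, map_fiber σ hσ a a'⟩
  · intro hσ
    refine Subgroup.mem_normalizer_iff.mpr fun h => ?_
    calc h ∈ fiberStabilizer f ↔ ∀ a, f (σ (h a)) = f (σ a) :=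
          forall_congr' fun a => (hσ _ _).symm
      _ ↔ ∀ a, f ((σ * h * σ⁻¹) (σ a)) = f (σ a) := by simp
      _ ↔ ∀ b, f ((σ * h * σ⁻¹) b) = f b :=
        σ.forall_congr_right (q := fun b => f ((σ * h * σ⁻¹) b) = f b)

theorem card_fiber_apply_of_mem_fiberPreserving (hσ : σ ∈ fiberPreserving f) (a : α) :
    Nat.card {x // f x = f (σ a)} = Nat.card {x // f x = f a} :=
  (Nat.card_congr (σ.subtypeEquiv fun x => (hσ x a).symm)).symm

section Sigma

variable {ι : Type*} {Y Z : ι → Type*}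

theorem sigmaCongrRight_mem_fiberStabilizer_iff (g : ∀ i, Y i → Z i) (τ : ∀ i, Perm (Y i)) :
    sigmaCongrRight τ ∈ fiberStabilizer (Sigma.map id g) ↔
      ∀ i, τ i ∈ fiberStabilizer (g i) := by
  simp only [mem_fiberStabilizer, Sigma.forall, sigmaCongrRight_apply, Sigma.map_mk, id,
    Sigma.mk.inj_iff, heq_eq_eq, true_and]

theorem sigmaCongrRight_mem_fiberPreserving_iff (g : ∀ i, Y i → Z i) (τ : ∀ i, Perm (Y i)) :
    sigmaCongrRight τ ∈ fiberPreserving (Sigma.map id g) ↔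
      ∀ i, τ i ∈ fiberPreserving (g i) := by
  simp only [mem_fiberPreserving, Sigma.forall, sigmaCongrRight_apply, Sigma.map_mk, id,
    Sigma.mk.inj_iff]
  constructor
  · intro h i y y'
    simpa using h i y i y'
  · intro h i y i' y'
    by_cases hi : i = i'
    · subst hi
      simpa using h i y y'
    · simp [hi]

theorem mem_range_sigmaCongrRightHom_iff {σ : Perm (Σ i, Y i)} :
    σ ∈ (sigmaCongrRightHom Y).range ↔ ∀ b, (σ b).1 = b.1 := by
  refine ⟨by rintro ⟨τ, rfl⟩ b; rfl, fun h => ?_⟩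
  have hfiber (i : ι) (b : Σ i, Y i) : (σ b).1 = i ↔ b.1 = i := by rw [h]
  refine ⟨fun i => (sigmaSubtype i).permCongr (σ.subtypePerm (hfiber i)), ?_⟩
  have mk_sigmaSubtype (i : ι) (s : {s : Σ i, Y i // s.1 = i}) :
      ⟨i, sigmaSubtype i s⟩ = s.1 := by
    obtain ⟨⟨_, y⟩, rfl⟩ := s
    rfl
  exact Equiv.ext fun ⟨i, y⟩ => mk_sigmaSubtype i ⟨σ ⟨i, y⟩, h _⟩

end Sigma

abbrev PermWreath (X ι : Type) : Type := (ι → Perm X) ⋊[permMulAut (Perm X) ι] Perm ι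

namespace PermWreath

variable {X ι : Type}

def toPerm : PermWreath X ι →* Perm (ι × X) where
  toFun p := prodShear p.right fun k => p.left (p.right k)
  map_one' := rfl
  map_mul' p q := by
    ext ⟨k, x⟩
    · rfl
    · rw [SemidirectProduct.mul_left, SemidirectProduct.mul_right]
      simp [permMulAut]

theorem toPerm_apply (p : PermWreath X ι) (a : ι × X) :
    toPerm p a = (p.right a.1, p.left (p.right a.1) a.2) :=
  rfl

theorem toPerm_injective [Nonempty X] :
    Function.Injective (toPerm : PermWreath X ι →* Perm (ι × X)) := by
  intro p q hpq
  obtain ⟨x₀⟩ := ‹Nonempty X›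
  have hright : p.right = q.right :=
    Equiv.ext fun k => congr_arg Prod.fst (congr($hpq (k, x₀)))
  refine SemidirectProduct.ext (funext fun k => Equiv.ext fun x => ?_) hright
  simpa [toPerm_apply, hright] using congr_arg Prod.snd (congr($hpq (q.right⁻¹ k, x)))

theorem toPerm_mem_fiberStabilizer_iff [Nonempty X] (p : PermWreath X ι) :
    toPerm p ∈ fiberStabilizer Prod.fst ↔ p.right = 1 := by
  obtain ⟨x₀⟩ := ‹Nonempty X›
  simp only [mem_fiberStabilizer, toPerm_apply, Prod.forall, Equiv.ext_iff, one_apply]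
  exact ⟨fun h k => h k x₀, fun h k _ => h k⟩

theorem range_toPerm [Finite ι] [Finite X] [Nonempty X] :
    (toPerm : PermWreath X ι →* Perm (ι × X)).range = fiberPreserving Prod.fst := by
  refine le_antisymm ?_ fun σ hσ => ?_
  · rintro _ ⟨p, rfl⟩ a a'
    simp [toPerm_apply]
  obtain ⟨x₀⟩ := ‹Nonempty X›
  have fst_apply (k : ι) (x : X) : (σ (k, x)).1 = (σ (k, x₀)).1 := (hσ _ _).mpr rfl
  let π : Perm ι := Equiv.ofBijective (fun k => (σ (k, x₀)).1) <|
    Finite.injective_iff_bijective.mp fun k k' h => (hσ (k, x₀) (k', x₀)).mp h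
  let row (k : ι) : Perm X := Equiv.ofBijective (fun x => (σ (k, x)).2) <|
    Finite.injective_iff_bijective.mp fun x x' h =>
      congr_arg Prod.snd <|
        σ.injective (Prod.ext ((fst_apply k x).trans (fst_apply k x').symm) h)
  refine ⟨⟨fun k => row (π.symm k), π⟩, Equiv.ext fun ⟨k, x⟩ => ?_⟩
  change (π k, row (π.symm (π k)) x) = σ (k, x)
  rw [π.symm_apply_apply]
  exact Prod.ext (fst_apply k x).symm rfl

end PermWreath

end Equiv.Perm

namespace BlockType

open Equiv Perm

variable {N : ℕ} {j : Fin N → ℕ}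

def blockIndex : BlockType N j → Σ i : Fin N, Fin (j i) :=
  Sigma.map id fun _ => Prod.fst

theorem blockSubgroup_eq_fiberStabilizer : blockSubgroup N j = fiberStabilizer blockIndex := by
  ext σ
  refine forall_congr' fun b => ?_
  simp only [blockIndex, Sigma.map, id, Sigma.mk.inj_iff]
  exact and_congr_right fun h => (Fin.heq_ext_iff (congr_arg j h)).symm

theorem card_fiber_blockIndex (b : BlockType N j) :
    Nat.card {b' // blockIndex b' = blockIndex b} = b.1 + 1 := by
  have hfiber : {b' | blockIndex b' = blockIndex b} =
      Set.range fun x : Fin (b.1 + 1) => (⟨b.1, b.2.1, x⟩ : BlockType N j) := by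
    ext b'
    constructor
    · intro h
      obtain ⟨i, k, x⟩ := b'
      cases h
      exact ⟨x, rfl⟩
    · rintro ⟨x, rfl⟩
      rfl
  have hinj : Function.Injective fun x : Fin (b.1 + 1) => (⟨b.1, b.2.1, x⟩ : BlockType N j) :=
    fun x x' h => by cases h; rfl
  have hcard := Nat.card_range_of_injective hinj
  rw [← hfiber, Nat.card_fin] at hcard
  exact hcard

theorem fst_apply_of_mem_fiberPreserving {σ : Perm (BlockType N j)}
    (hσ : σ ∈ fiberPreserving blockIndex) (b : BlockType N j) : (σ b).1 = b.1 :=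
  Fin.ext <| Nat.add_right_cancel <| by
    simpa only [card_fiber_blockIndex] using card_fiber_apply_of_mem_fiberPreserving hσ b

def blockPerm (N : ℕ) (j : Fin N → ℕ) :
    (∀ i : Fin N, PermWreath (Fin (i.1 + 1)) (Fin (j i))) →* Perm (BlockType N j) :=
  (sigmaCongrRightHom _).comp (MonoidHom.piMap fun _ => PermWreath.toPerm)

theorem blockPerm_injective : Function.Injective (blockPerm N j) :=
  sigmaCongrRightHom_injective.comp <|
    Function.Injective.piMap fun _ => PermWreath.toPerm_injective

theorem range_blockPerm :
    (blockPerm N j).range =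
      Subgroup.normalizer (blockSubgroup N j : Set (Perm (BlockType N j))) := by
  rw [blockSubgroup_eq_fiberStabilizer, normalizer_fiberStabilizer]
  apply le_antisymm
  · rintro _ ⟨p, rfl⟩
    exact (sigmaCongrRight_mem_fiberPreserving_iff _ _).mpr fun i =>
      PermWreath.range_toPerm.le ⟨p i, rfl⟩
  · intro σ hσ
    obtain ⟨τ, rfl⟩ :=
      mem_range_sigmaCongrRightHom_iff.mpr (fst_apply_of_mem_fiberPreserving hσ)
    choose p hp using fun i =>
      PermWreath.range_toPerm.ge ((sigmaCongrRight_mem_fiberPreserving_iff _ _).mp hσ i)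
    exact ⟨p, congr_arg (sigmaCongrRightHom _) (funext hp)⟩

theorem blockPerm_mem_blockSubgroup_iff
    (p : ∀ i : Fin N, PermWreath (Fin (i.1 + 1)) (Fin (j i))) :
    blockPerm N j p ∈ blockSubgroup N j ↔ ∀ i, (p i).right = 1 := by
  rw [blockSubgroup_eq_fiberStabilizer]
  exact (sigmaCongrRight_mem_fiberStabilizer_iff _ _).trans
    (forall_congr' fun i => PermWreath.toPerm_mem_fiberStabilizer_iff (p i))

noncomputable def normalizerEquiv (N : ℕ) (j : Fin N → ℕ) :
    (∀ i : Fin N, PermWreath (Fin (i.1 + 1)) (Fin (j i))) ≃*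
      Subgroup.normalizer (blockSubgroup N j : Set (Perm (BlockType N j))) :=
  (MonoidHom.ofInjective blockPerm_injective).trans (MulEquiv.subgroupCongr range_blockPerm)

theorem coe_normalizerEquiv_apply (p : ∀ i : Fin N, PermWreath (Fin (i.1 + 1)) (Fin (j i))) :
    (normalizerEquiv N j p : Perm (BlockType N j)) = blockPerm N j p :=
  rfl

end BlockType

/-- For `H = Im(e_φ) ≤ Sₙ` the subgroup attached to a partition of `{1,…,n}`
into `j i` blocks of size `i`, the normalizer `N(H)` is isomorphic to the product of wreath
products `∏ᵢ (Sᵢ ≀ S_{jᵢ})`, and `N(H)/H ≅ ∏ᵢ S_{jᵢ}` (expressed by a surjective homomorphism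
from `N(H)` with kernel `H`). -/
theorem normalizer_of_block_subgroup (N : ℕ) (j : Fin N → ℕ) :
    Nonempty (Subgroup.normalizer (blockSubgroup N j : Set (Equiv.Perm (BlockType N j))) ≃*
      ∀ i : Fin N, (Fin (j i) → Equiv.Perm (Fin (i.1 + 1))) ⋊[permMulAut _ _] Equiv.Perm (Fin (j i))) ∧
    ∃ f : Subgroup.normalizer (blockSubgroup N j : Set (Equiv.Perm (BlockType N j))) →* (∀ i : Fin N, Equiv.Perm (Fin (j i))),
      Function.Surjective ⇑f ∧
        f.ker = (blockSubgroup N j).subgroupOf (Subgroup.normalizer (blockSubgroup N j : Set (Equiv.Perm (BlockType N j)))) := by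
  let e := BlockType.normalizerEquiv N j
  refine ⟨⟨e.symm⟩,
    (MonoidHom.piMap fun _ => SemidirectProduct.rightHom).comp e.symm.toMonoidHom, ?_, ?_⟩
  · exact (Function.Surjective.piMap fun _ => SemidirectProduct.rightHom_surjective).comp
      e.symm.surjective
  · ext σ
    have hσ : BlockType.blockPerm N j (e.symm σ) = σ := by
      rw [← BlockType.coe_normalizerEquiv_apply, MulEquiv.apply_symm_apply]
    rw [Subgroup.mem_subgroupOf, MonoidHom.mem_ker, ← hσ,
      BlockType.blockPerm_mem_blockSubgroup_iff, funext_iff]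
    rfl
end

section
/- Two subgroups of S_n of the form Im(e_φ) and Im(e_ψ), corresponding to multiplicities (j_1,…,j_n) and (j'_1,…,j'_n), are conjugate in S_n if and only if j_i = j'_i for all i. -/
/-!
Conjugation by `σ` carries `partitionSubgroup n (g ∘ σ)` onto `partitionSubgroup n g`, and a
partition subgroup recovers its partition as the pairs `x, y` whose transposition it contains. So
conjugacy means that some permutation carries the partition of `f` onto that of `g`, i.e. that
there is a size-preserving bijection between the blocks; matching fibres (`Equiv.ofFiberEquiv`),
such a bijection exists iff the block-size multiplicities agree.
-/

/-- The subgroup `Im(e_φ)` of `Sₙ` attached to a partition of `{1,…,n}` (encoded as the fibers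
of a function `f`): the permutations preserving each block of the partition. -/
def partitionSubgroup (n : ℕ) (f : Fin n → ℕ) : Subgroup (Equiv.Perm (Fin n)) where
  carrier := {σ | ∀ i, f (σ i) = f i}
  one_mem' := by intro i; simp
  mul_mem' := by
    intro σ τ hσ hτ i
    simpa [Equiv.Perm.mul_apply, hσ (τ i)] using hτ i
  inv_mem' := by
    intro σ hσ i
    have h := hσ (σ⁻¹ i)
    rw [show σ (σ⁻¹ i) = i from σ.apply_symm_apply i] at h
    exact h.symm

/-- The number of blocks of size `i` of the partition of `Fin n` given by the fibers of `f`. -/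
noncomputable def blockMultiplicity (n : ℕ) (f : Fin n → ℕ) (i : ℕ) : ℕ :=
  Nat.card {v : Set.range f // Nat.card {x : Fin n // f x = (v : ℕ)} = i}

section Blocks

variable {α α' β γ : Type*}

theorem exists_equiv_comp_eq_iff_card_fiber_eq [Finite α] [Finite α'] (f : α → β)
    (g : α' → β) :
    (∃ e : α ≃ α', ∀ x, g (e x) = f x) ↔
      ∀ b, Nat.card {x // f x = b} = Nat.card {x // g x = b} := by
  constructor
  · rintro ⟨e, he⟩ b
    exact Nat.card_congr (e.subtypeEquiv fun x => by rw [he])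
  · intro h
    exact ⟨Equiv.ofFiberEquiv fun b => (Finite.card_eq.mp (h b)).some, Equiv.ofFiberEquiv_map _⟩

noncomputable def blockSize (f : α → β) (v : Set.range f) : ℕ :=
  Nat.card {x // f x = v}

theorem card_rangeFactorization_fiber (f : α → β) (v : Set.range f) :
    Nat.card {x // Set.rangeFactorization f x = v} = blockSize f v :=
  Nat.card_congr (Equiv.subtypeEquivRight fun x => Set.rangeFactorization_eq_iff x v)

theorem Setoid.ker_eq_ker_comp_iff_exists_rangeEquiv (f : α → β) (g : α' → γ) (e : α ≃ α') :
    Setoid.ker f = Setoid.ker (g ∘ e) ↔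
      ∃ c : Set.range f ≃ Set.range g,
        ∀ x, Set.rangeFactorization g (e x) = c (Set.rangeFactorization f x) := by
  constructor
  · intro h
    have hker : ∀ x y, Setoid.ker f x y ↔ Setoid.ker g (e x) (e y) := fun x y => by
      rw [h]; rfl
    refine ⟨(Setoid.quotientKerEquivRange f).symm.trans
      ((Quotient.congr e hker).trans (Setoid.quotientKerEquivRange g)), fun x => ?_⟩
    have hx : (Setoid.quotientKerEquivRange f).symm (Set.rangeFactorization f x) = ⟦x⟧ :=
      (Equiv.symm_apply_eq _).mpr rfl
    simp only [Equiv.trans_apply, hx]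
    rfl
  · rintro ⟨c, hc⟩
    ext x y
    rw [Setoid.ker_def, Setoid.ker_def, Function.comp_apply, Function.comp_apply,
      ← Set.rangeFactorization_eq_rangeFactorization_iff (f := f),
      ← Set.rangeFactorization_eq_rangeFactorization_iff (f := g), hc, hc, c.apply_eq_iff_eq]

theorem exists_equiv_ker_eq_ker_comp_iff_card_blockSize_eq [Finite α] [Finite α'] (f : α → β)
    (g : α' → γ) :
    (∃ e : α ≃ α', Setoid.ker f = Setoid.ker (g ∘ e)) ↔
      ∀ i, Nat.card {v // blockSize f v = i} = Nat.card {w // blockSize g w = i} := calc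
  _ ↔ ∃ c : Set.range f ≃ Set.range g, ∃ e : α ≃ α',
        ∀ x, Set.rangeFactorization g (e x) = c (Set.rangeFactorization f x) := by
    simp only [Setoid.ker_eq_ker_comp_iff_exists_rangeEquiv]
    exact exists_comm
  _ ↔ ∃ c : Set.range f ≃ Set.range g, ∀ w, blockSize f (c.symm w) = blockSize g w := by
    refine exists_congr fun c => ?_
    simp_rw [exists_equiv_comp_eq_iff_card_fiber_eq, ← c.eq_symm_apply,
      card_rangeFactorization_fiber]
  _ ↔ ∃ c : Set.range f ≃ Set.range g, ∀ v, blockSize g (c v) = blockSize f v := by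
    refine exists_congr fun c => ?_
    refine c.forall_congr_right.symm.trans (forall_congr' fun v => ?_)
    rw [c.symm_apply_apply, eq_comm]
  _ ↔ _ := exists_equiv_comp_eq_iff_card_fiber_eq _ _

end Blocks

section PartitionSubgroup

variable {n : ℕ}

theorem swap_mem_partitionSubgroup (f : Fin n → ℕ) (x y : Fin n) :
    Equiv.swap x y ∈ partitionSubgroup n f ↔ f x = f y := by
  refine ⟨fun h => by simpa using h y, fun h i => ?_⟩
  rcases eq_or_ne i x with rfl | hx
  · simp [h]
  rcases eq_or_ne i y with rfl | hy
  · simp [h]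
  · rw [Equiv.swap_apply_of_ne_of_ne hx hy]

theorem partitionSubgroup_eq_iff (f g : Fin n → ℕ) :
    partitionSubgroup n f = partitionSubgroup n g ↔ Setoid.ker f = Setoid.ker g := by
  constructor
  · intro h
    ext x y
    rw [Setoid.ker_def, Setoid.ker_def, ← swap_mem_partitionSubgroup, h,
      swap_mem_partitionSubgroup]
  · intro h
    ext σ
    exact forall_congr' fun i => Setoid.ext_iff.mp h (σ i) i

theorem map_conj_partitionSubgroup_comp (σ : Equiv.Perm (Fin n)) (g : Fin n → ℕ) :
    (partitionSubgroup n (g ∘ σ)).map (MulAut.conj σ).toMonoidHom = partitionSubgroup n g := by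
  ext ρ
  rw [Subgroup.mem_map_equiv]
  refine Iff.trans ?_ σ.forall_congr_right
  simp [partitionSubgroup]

end PartitionSubgroup

/-- Two subgroups of `Sₙ` of the form `Im(e_φ)`, `Im(e_ψ)`, with multiplicities
`(j₁,…,jₙ)` and `(j'₁,…,j'ₙ)`, are conjugate in `Sₙ` if and only if `jᵢ = j'ᵢ` for all `i`. -/
theorem partition_subgroups_conjugate_iff (n : ℕ) (f g : Fin n → ℕ) :
    (∃ σ : Equiv.Perm (Fin n),
        Subgroup.map (MulAut.conj σ).toMonoidHom (partitionSubgroup n f) =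
          partitionSubgroup n g) ↔
      ∀ i : ℕ, blockMultiplicity n f i = blockMultiplicity n g i := calc
  _ ↔ ∃ σ : Equiv.Perm (Fin n), partitionSubgroup n f = partitionSubgroup n (g ∘ σ) :=
    exists_congr fun σ => by
      rw [← map_conj_partitionSubgroup_comp σ g,
        (Subgroup.map_injective (MulAut.conj σ).injective).eq_iff]
  _ ↔ ∃ σ : Equiv.Perm (Fin n), Setoid.ker f = Setoid.ker (g ∘ σ) := by
    simp only [partitionSubgroup_eq_iff]
  _ ↔ _ := exists_equiv_ker_eq_ker_comp_iff_card_blockSize_eq f g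
end

section
/- Let H = Im(e_φ) ≤ S_n be the subgroup corresponding to multiplicities (j_1,…,j_n) with Σ i·j_i = n, acting on V(m,n) = {(x_1,…,x_n) ∈ (k^m)^n : Σx_i = 0}. Then the H-fixed subspace V(m,n)^{≥H} consists of tuples that are constant on each block of the partition, and the quotient space V(m,n)/V(m,n)^{≥H} is isomorphic as a representation of H to the direct sum ⊕_{i=1}^n V(m,i)^{⊕ j_i}. -/
instance (N : ℕ) (j : Fin N → ℕ) : Fintype (BlockType N j) := by
  unfold BlockType; infer_instance

/-- The action on `BlockType N j` of an element `h` of `H = ∏ᵢ Sᵢ^{jᵢ}`, acting on each block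
separately. -/
def bAct {N : ℕ} {j : Fin N → ℕ} (h : ∀ i : Fin N, Fin (j i) → Equiv.Perm (Fin (i.1 + 1))) :
    BlockType N j → BlockType N j :=
  fun b => ⟨b.1, b.2.1, h b.1 b.2.1 b.2.2⟩

/-- The sum map `(k^m)^ι → k^m`; its kernel is the reduced permutation representation
`V(m,ι)`. -/
noncomputable def sumMap (k : Type) [Field k] (m : ℕ) (ι : Type) [Fintype ι] :
    (ι → Fin m → k) →ₗ[k] (Fin m → k) where
  toFun x := ∑ i : ι, x i
  map_add' := by intro x y; simp [Finset.sum_add_distrib]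
  map_smul' := by intro c x; simp [Finset.smul_sum]

/-!
Subtracting from each block its mean is well defined because every block size divides `n!`,
which is invertible in `k`. This centering is a linear map `V(m,n) → ⊕ V(m,i)` commuting with
the block permutations; its kernel consists of the block-constant tuples, and it is surjective
because gluing the blocks of any target element gives a tuple with zero block sums, which is
its own centering.
-/

section Centering

variable {k M ι : Type*} [Field k] [AddCommGroup M] [Module k M] [Fintype ι]

noncomputable def center : (ι → M) →ₗ[k] (ι → M) :=
  LinearMap.id - (Fintype.card ι : k)⁻¹ • LinearMap.pi fun _ => ∑ t, LinearMap.proj t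

theorem center_apply (x : ι → M) (s : ι) :
    center (k := k) x s = x s - (Fintype.card ι : k)⁻¹ • ∑ t, x t := by
  simp [center]

theorem inv_card_smul_card_smul (hι : (Fintype.card ι : k) ≠ 0) (v : M) :
    (Fintype.card ι : k)⁻¹ • (Fintype.card ι • v) = v := by
  rw [← Nat.cast_smul_eq_nsmul k, smul_smul, inv_mul_cancel₀ hι, one_smul]

theorem sum_center (hι : (Fintype.card ι : k) ≠ 0) (x : ι → M) :
    ∑ s, center (k := k) x s = 0 := by
  simp only [center_apply, Finset.sum_sub_distrib, Finset.sum_const, Finset.card_univ]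
  rw [smul_comm, inv_card_smul_card_smul hι, sub_self]

theorem center_eq_self_of_sum_eq_zero {x : ι → M} (hx : ∑ t, x t = 0) :
    center (k := k) x = x := by
  ext s
  simp [center_apply, hx]

theorem center_eq_zero_iff (hι : (Fintype.card ι : k) ≠ 0) (x : ι → M) :
    center (k := k) x = 0 ↔ ∀ s s', x s = x s' := by
  simp only [funext_iff, center_apply, Pi.zero_apply, sub_eq_zero]
  constructor
  · intro hx s s'
    rw [hx s, hx s']
  · intro hx s
    have hsum : ∑ t, x t = Fintype.card ι • x s := by
      simp [hx _ s]
    rw [hsum, inv_card_smul_card_smul hι]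

theorem center_comp_perm (σ : Equiv.Perm ι) (x : ι → M) :
    center (k := k) (x ∘ σ) = center (k := k) x ∘ σ := by
  ext s
  simp [center_apply, Equiv.sum_comp σ x]

end Centering

theorem Nat.cast_ne_zero_of_isUnit_factorial {k : Type*} [CommSemiring k] [Nontrivial k]
    {a n : ℕ} (ha : 0 < a) (han : a ≤ n) (hn : IsUnit (n.factorial : k)) : (a : k) ≠ 0 :=
  (isUnit_of_dvd_unit (Nat.cast_dvd_cast (Nat.dvd_factorial ha han)) hn).ne_zero

theorem mem_ker_sumMap {k : Type} [Field k] {m : ℕ} {ι : Type} [Fintype ι]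
    {x : ι → Fin m → k} : x ∈ LinearMap.ker (sumMap k m ι) ↔ ∑ i, x i = 0 :=
  Iff.rfl

namespace BlockType

variable {N : ℕ} {j : Fin N → ℕ}

abbrev Block (N : ℕ) (j : Fin N → ℕ) : Type :=
  Σ i : Fin N, Fin (j i)

def incl (p : Block N j) : Fin (p.1.1 + 1) → BlockType N j :=
  fun s => ⟨p.1, p.2, s⟩

def glue {X : Type*} (y : ∀ p : Block N j, Fin (p.1.1 + 1) → X) : BlockType N j → X :=
  fun b => y ⟨b.1, b.2.1⟩ b.2.2

theorem incl_injective (p : Block N j) : Function.Injective (incl p) := by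
  intro s s' h
  exact Fin.ext (congrArg (fun b : BlockType N j => (b.2.2 : ℕ)) h)

theorem bAct_comp_incl (h : ∀ i : Fin N, Fin (j i) → Equiv.Perm (Fin (i.1 + 1)))
    (p : Block N j) : bAct h ∘ incl p = incl p ∘ h p.1 p.2 :=
  rfl

theorem sum_eq_sum_sum {M : Type*} [AddCommMonoid M] (f : BlockType N j → M) :
    ∑ b, f b = ∑ p : Block N j, ∑ s, f (incl p s) := by
  calc ∑ b, f b = ∑ i, ∑ bs : Fin (j i) × Fin (i.1 + 1), f ⟨i, bs⟩ := Fintype.sum_sigma _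
    _ = _ := by simp only [incl, Fintype.sum_sigma, Fintype.sum_prod_type]

theorem comp_bAct_eq_self_iff {X : Type*} (x : BlockType N j → X) :
    (∀ h, x ∘ bAct h = x) ↔ ∀ (i : Fin N) (b : Fin (j i)) (s s' : Fin (i.1 + 1)),
      x ⟨i, b, s⟩ = x ⟨i, b, s'⟩ := by
  constructor
  · intro hx i b s s'
    have hswap : x (bAct (Pi.mulSingle i (Pi.mulSingle b (Equiv.swap s s'))) ⟨i, b, s⟩) =
        x ⟨i, b, s⟩ :=
      congrFun (hx _) _
    simpa [bAct] using hswap.symm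
  · rintro hx h
    funext ⟨i, b, s⟩
    exact hx i b _ s

end BlockType

open BlockType

section BlockCenter

variable {k : Type} [Field k] {m N : ℕ} {j : Fin N → ℕ}

theorem blockSize_ne_zero (hchar : IsUnit ((Fintype.card (BlockType N j)).factorial : k))
    (p : Block N j) : ((p.1.1 + 1 : ℕ) : k) ≠ 0 :=
  Nat.cast_ne_zero_of_isUnit_factorial p.1.1.succ_pos
    (by simpa using Fintype.card_le_of_injective _ (incl_injective p)) hchar

variable (hsize : ∀ p : Block N j, ((p.1.1 + 1 : ℕ) : k) ≠ 0)

noncomputable def blockCenter :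
    LinearMap.ker (sumMap k m (BlockType N j)) →ₗ[k]
      ∀ p : Block N j, LinearMap.ker (sumMap k m (Fin (p.1.1 + 1))) :=
  LinearMap.pi fun p => LinearMap.codRestrict _
    (center ∘ₗ LinearMap.funLeft k (Fin m → k) (incl p) ∘ₗ Submodule.subtype _)
    fun _ => mem_ker_sumMap.2 (sum_center (by rw [Fintype.card_fin]; exact hsize p) _)

theorem blockCenter_apply (x : LinearMap.ker (sumMap k m (BlockType N j))) (p : Block N j) :
    (blockCenter hsize x p : Fin (p.1.1 + 1) → Fin m → k) = center (k := k) (x ∘ incl p) :=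
  rfl

theorem blockCenter_surjective : Function.Surjective (blockCenter (m := m) hsize) := by
  intro y
  have hglue : glue (fun p => (y p : Fin (p.1.1 + 1) → Fin m → k)) ∈
      LinearMap.ker (sumMap k m (BlockType N j)) := by
    rw [mem_ker_sumMap, sum_eq_sum_sum]
    exact Finset.sum_eq_zero fun p _ => (y p).2
  exact ⟨⟨_, hglue⟩, funext fun p => Subtype.ext (center_eq_self_of_sum_eq_zero (y p).2)⟩

theorem blockCenter_eq_zero_iff (x : LinearMap.ker (sumMap k m (BlockType N j))) :
    blockCenter hsize x = 0 ↔ ∀ (i : Fin N) (b : Fin (j i)) (s s' : Fin (i.1 + 1)),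
      (x : BlockType N j → Fin m → k) ⟨i, b, s⟩ =
        (x : BlockType N j → Fin m → k) ⟨i, b, s'⟩ := by
  rw [funext_iff, Sigma.forall]
  refine forall₂_congr fun i b => ?_
  rw [Pi.zero_apply, ← Subtype.coe_inj, blockCenter_apply, ZeroMemClass.coe_zero,
    center_eq_zero_iff (by rw [Fintype.card_fin]; exact hsize ⟨i, b⟩)]
  rfl

theorem blockCenter_comp_bAct (h : ∀ i : Fin N, Fin (j i) → Equiv.Perm (Fin (i.1 + 1)))
    {x y : LinearMap.ker (sumMap k m (BlockType N j))}
    (hxy : (y : BlockType N j → Fin m → k) = x ∘ bAct h) (p : Block N j) :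
    (blockCenter hsize y p : Fin (p.1.1 + 1) → Fin m → k) =
      blockCenter hsize x p ∘ h p.1 p.2 := by
  rw [blockCenter_apply, blockCenter_apply, hxy, Function.comp_assoc, bAct_comp_incl,
    ← Function.comp_assoc, center_comp_perm]

end BlockCenter

/-- For `H = Im(e_φ) ≤ Sₙ` with multiplicities `(j₁,…,jₙ)` acting on
`V(m,n) = {x : Σ xᵢ = 0}`, the `H`-fixed subspace consists of the tuples constant on each
block, and the quotient `V(m,n)/V(m,n)^{≥H}` is `H`-equivariantly isomorphic to
`⊕ᵢ V(m,i)^{⊕ jᵢ}` (expressed via a surjective equivariant linear map whose kernel is the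
fixed subspace). -/
theorem quotient_by_fixed_subspace (k : Type) [Field k] (m N : ℕ) (j : Fin N → ℕ)
    (hchar : IsUnit ((Nat.factorial (Fintype.card (BlockType N j)) : k))) :
    -- the `H`-fixed vectors are exactly the tuples constant on each block
    (∀ x : ↥(LinearMap.ker (sumMap k m (BlockType N j))),
      ((∀ h, (x : BlockType N j → Fin m → k) ∘ bAct h = (x : BlockType N j → Fin m → k)) ↔
        (∀ (i : Fin N) (b : Fin (j i)) (s s' : Fin (i.1 + 1)),
          (x : BlockType N j → Fin m → k) ⟨i, b, s⟩ =
            (x : BlockType N j → Fin m → k) ⟨i, b, s'⟩))) ∧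
    -- `V(m,n)/V(m,n)^{≥H} ≅ ⊕ᵢ V(m,i)^{⊕ jᵢ}` equivariantly
    (∃ q : ↥(LinearMap.ker (sumMap k m (BlockType N j))) →ₗ[k]
        (∀ p : Σ i : Fin N, Fin (j i), ↥(LinearMap.ker (sumMap k m (Fin (p.1.1 + 1))))),
      Function.Surjective ⇑q ∧
      (∀ x, q x = 0 ↔
        (∀ (i : Fin N) (b : Fin (j i)) (s s' : Fin (i.1 + 1)),
          (x : BlockType N j → Fin m → k) ⟨i, b, s⟩ =
            (x : BlockType N j → Fin m → k) ⟨i, b, s'⟩)) ∧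
      (∀ (h : ∀ i : Fin N, Fin (j i) → Equiv.Perm (Fin (i.1 + 1)))
          (x y : ↥(LinearMap.ker (sumMap k m (BlockType N j)))),
        (y : BlockType N j → Fin m → k) = (x : BlockType N j → Fin m → k) ∘ bAct h →
        ∀ p : Σ i : Fin N, Fin (j i),
          ((q y p : Fin (p.1.1 + 1) → Fin m → k)) =
            ((q x p : Fin (p.1.1 + 1) → Fin m → k)) ∘ ⇑(h p.1 p.2))) := by
  have hsize := blockSize_ne_zero hchar
  exact ⟨fun x => comp_bAct_eq_self_iff _, blockCenter hsize, blockCenter_surjective hsize,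
    blockCenter_eq_zero_iff hsize, fun h _ _ hxy => blockCenter_comp_bAct hsize h hxy⟩
end

section
/- Let W be a finite étale scheme of degree d over a field k and (X, Z) a pair of a k-scheme X with closed subscheme Z of codimension ≥ n. Then in the scheme X^W of W-points (the Weil restriction along W), the closed subscheme Z^W has codimension ≥ nd. -/
/-!
Over a field every module is flat, so for a prime `Q` of `R ⊗[k] T` the ring
`R ⊗[k] (T ⧸ Q ∩ T)` is flat over `R`, and flat going down lets one shrink the contraction
`Q ∩ R` to any smaller prime while keeping `Q ∩ T` fixed. Splitting `R^{⊗d}` as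
`R ⊗ R^{⊗(d-1)}` in each factor, this gives two consequences. A minimal prime `Q` over
`∑ᵢ ιᵢ(I)` contracts in every factor to a minimal prime of `I` (otherwise `Q` could be
shrunk). And chains below the contractions can be lifted one factor at a time, each step
moving `Q` strictly down, so `ht Q ≥ ∑ᵢ ht (ιᵢ⁻¹ Q) ≥ n d`.
-/

open scoped TensorProduct

namespace Order

theorem exists_lt_coe_le_height_of_coe_add_one_le_height {α : Type*} [Preorder α] {x : α}
    {m : ℕ} (h : ((m + 1 : ℕ) : ℕ∞) ≤ height x) : ∃ y < x, (m : ℕ∞) ≤ height y := by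
  by_contra! hy
  exact (height_le_coe_iff.mpr hy).not_gt (lt_of_lt_of_le (by exact_mod_cast m.lt_succ_self) h)

theorem sum_le_height_of_going_down {ι α : Type*} {β : ι → Type*} [Fintype ι] [Preorder α]
    [∀ i, Preorder (β i)] (f : ∀ i, α → β i)
    (hf : ∀ x j, ∀ y < f j x, ∃ x' < x, f j x' = y ∧ ∀ i ≠ j, f i x' = f i x)
    (c : ι → ℕ) (x : α) (hc : ∀ i, (c i : ℕ∞) ≤ height (f i x)) :
    ((∑ i, c i : ℕ) : ℕ∞) ≤ height x := by
  classical
  obtain ⟨N, hN⟩ : ∃ N, ∑ i, c i = N := ⟨_, rfl⟩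
  induction N generalizing c x with
  | zero => simp [hN]
  | succ N ih =>
    obtain ⟨j, hj⟩ : ∃ j, c j ≠ 0 := by
      by_contra! h
      simp [h] at hN
    obtain ⟨y, hy, hcy⟩ := exists_lt_coe_le_height_of_coe_add_one_le_height (m := c j - 1)
      (x := f j x) (by rw [Nat.sub_add_cancel (Nat.pos_of_ne_zero hj)]; exact hc j)
    obtain ⟨x', hx', rfl, hfix⟩ := hf x j y hy
    have hsum : ∑ i, Function.update c j (c j - 1) i = N := by
      rw [Finset.sum_update_of_mem (Finset.mem_univ j)]
      rw [← Finset.add_sum_erase _ c (Finset.mem_univ j), Finset.erase_eq] at hN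
      omega
    have hN' : (N : ℕ∞) ≤ height x' := hsum ▸ ih _ x' (fun i => by
      rcases eq_or_ne i j with rfl | hi
      · simpa using hcy
      · simpa [hi, hfix i hi] using hc i) hsum
    calc ((∑ i, c i : ℕ) : ℕ∞) = N + 1 := by rw [hN]; push_cast; rfl
      _ ≤ height x' + 1 := by gcongr
      _ ≤ height x := height_add_one_le hx'

end Order

namespace Algebra.TensorProduct

variable {k C B : Type*} [Field k] [CommRing C] [CommRing B] [Algebra k C] [Algebra k B]

theorem exists_prime_le_of_le_comap_includeLeft (Q : Ideal (C ⊗[k] B)) [Q.IsPrime]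
    (p : Ideal C) [p.IsPrime] (hp : p ≤ Q.comap (includeLeft : C →ₐ[k] C ⊗[k] B)) :
    ∃ P ≤ Q, P.IsPrime ∧ P.comap (includeLeft : C →ₐ[k] C ⊗[k] B) = p ∧
      P.comap (includeRight : B →ₐ[k] C ⊗[k] B) = Q.comap includeRight := by
  set q := Q.comap (includeRight : B →ₐ[k] C ⊗[k] B)
  set π : C ⊗[k] B →ₐ[k] C ⊗[k] (B ⧸ q) := map (AlgHom.id k C) (Ideal.Quotient.mkₐ k q)
  have hπ : Function.Surjective π :=
    map_surjective _ _ Function.surjective_id (Ideal.Quotient.mkₐ_surjective k q)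
  have hker : RingHom.ker π = q.map (includeRight : B →ₐ[k] C ⊗[k] B) := by
    rw [lTensor_ker _ (Ideal.Quotient.mkₐ_surjective k q)]
    exact congrArg _ (Ideal.Quotient.mkₐ_ker k q)
  have hkerQ : RingHom.ker π ≤ Q := hker ▸ Ideal.map_comap_le
  have := Ideal.map_isPrime_of_surjective hπ hkerQ
  have hQπ : (Q.map π).comap π = Q := by
    rw [Ideal.comap_map_of_surjective' _ hπ, sup_eq_left.mpr hkerQ]
  have hunder : (Q.map π).under C = Q.comap (includeLeft : C →ₐ[k] C ⊗[k] B) := by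
    conv_rhs => rw [← hQπ]
    rfl
  have : Module.Flat C (C ⊗[k] (B ⧸ q)) := inferInstance
  have : (Q.map π).LiesOver (Q.comap (includeLeft : C →ₐ[k] C ⊗[k] B)) := ⟨hunder.symm⟩
  obtain ⟨P, hPQ, hP, hPp⟩ := Ideal.exists_ideal_le_liesOver_of_le (Q.map π) hp
  have hPQ' : P.comap π ≤ Q := hQπ ▸ Ideal.comap_mono hPQ
  refine ⟨P.comap π, hPQ', Ideal.comap_isPrime _ _, ?_, ?_⟩
  · rw [hPp.over]
    rfl
  · refine le_antisymm (Ideal.comap_mono hPQ') ?_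
    rw [← Ideal.map_le_iff_le_comap, ← hker]
    exact Ideal.comap_mono bot_le

end Algebra.TensorProduct

namespace PiTensorProduct

section Lift

variable {k ι S : Type*} {A : ι → Type*} [CommSemiring k] [Fintype ι]
  [∀ i, CommSemiring (A i)] [∀ i, Algebra k (A i)] [CommSemiring S] [Algebra k S]

def liftOfAlgHoms (φ : ∀ i, A i →ₐ[k] S) : (⨂[k] i, A i) →ₐ[k] S :=
  liftAlgHom ((MultilinearMap.mkPiAlgebra k ι S).compLinearMap fun i => (φ i).toLinearMap)
    (by simp) (fun x y => by simp [Finset.prod_mul_distrib])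

@[simp]
theorem liftOfAlgHoms_tprod (φ : ∀ i, A i →ₐ[k] S) (x : ∀ i, A i) :
    liftOfAlgHoms φ (tprod k x) = ∏ i, φ i (x i) := by
  simp [liftOfAlgHoms, liftAlgHom]

@[simp]
theorem liftOfAlgHoms_comp_singleAlgHom [DecidableEq ι] (φ : ∀ i, A i →ₐ[k] S) (i : ι) :
    (liftOfAlgHoms φ).comp (singleAlgHom i) = φ i := by
  ext a
  rw [AlgHom.comp_apply, singleAlgHom_apply, liftOfAlgHoms_tprod, Fintype.prod_eq_single i]
  · simp
  · intro j hj
    simp [Pi.mulSingle, Function.update_of_ne hj]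

end Lift

section Split

variable (k : Type*) {ι : Type*} (R : Type*) [CommSemiring k] [Fintype ι] [DecidableEq ι]
  [CommSemiring R] [Algebra k R] (j : ι)

def toTensorCompl : (⨂[k] _ : ι, R) →ₐ[k] R ⊗[k] (⨂[k] _ : {i // i ≠ j}, R) :=
  liftOfAlgHoms fun i => if h : i = j then Algebra.TensorProduct.includeLeft
    else Algebra.TensorProduct.includeRight.comp (singleAlgHom (A := fun _ => R) ⟨i, h⟩)

def ofTensorCompl : R ⊗[k] (⨂[k] _ : {i // i ≠ j}, R) →ₐ[k] (⨂[k] _ : ι, R) :=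
  Algebra.TensorProduct.lift (singleAlgHom (A := fun _ => R) j)
    (liftOfAlgHoms fun i => singleAlgHom (A := fun _ => R) i.1) fun _ _ => Commute.all _ _

theorem toTensorCompl_comp_singleAlgHom_self :
    (toTensorCompl k R j).comp (singleAlgHom j) = Algebra.TensorProduct.includeLeft := by
  simp [toTensorCompl]

theorem toTensorCompl_comp_singleAlgHom_of_ne {i : ι} (h : i ≠ j) :
    (toTensorCompl k R j).comp (singleAlgHom i) =
      Algebra.TensorProduct.includeRight.comp (singleAlgHom (A := fun _ => R) ⟨i, h⟩) := by
  simp [toTensorCompl, h]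

theorem ofTensorCompl_comp_includeLeft :
    (ofTensorCompl k R j).comp Algebra.TensorProduct.includeLeft =
      singleAlgHom (A := fun _ => R) j := by
  simp [ofTensorCompl]

theorem ofTensorCompl_comp_includeRight_comp_singleAlgHom (i : {i // i ≠ j}) :
    ((ofTensorCompl k R j).comp Algebra.TensorProduct.includeRight).comp
      (singleAlgHom i) = singleAlgHom (A := fun _ => R) i.1 := by
  simp [ofTensorCompl]

theorem ofTensorCompl_comp_toTensorCompl :
    (ofTensorCompl k R j).comp (toTensorCompl k R j) = AlgHom.id k _ := by
  ext i : 1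
  rw [AlgHom.comp_assoc]
  by_cases h : i = j
  · subst h
    rw [toTensorCompl_comp_singleAlgHom_self, ofTensorCompl_comp_includeLeft, AlgHom.id_comp]
  · rw [toTensorCompl_comp_singleAlgHom_of_ne k R j h, ← AlgHom.comp_assoc,
      ofTensorCompl_comp_includeRight_comp_singleAlgHom, AlgHom.id_comp]

end Split

section GoingDown

variable {k ι R : Type*} [Field k] [Fintype ι] [DecidableEq ι] [CommRing R] [Algebra k R]

theorem exists_prime_le_of_le_comap_singleAlgHom (Q : Ideal (⨂[k] _ : ι, R)) [Q.IsPrime]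
    (j : ι) (p : Ideal R) [p.IsPrime] (hp : p ≤ Q.comap (singleAlgHom (A := fun _ => R) j)) :
    ∃ P ≤ Q, P.IsPrime ∧ P.comap (singleAlgHom (A := fun _ => R) j) = p ∧
      ∀ i ≠ j, P.comap (singleAlgHom (A := fun _ => R) i) = Q.comap (singleAlgHom i) := by
  have hp' : p ≤ (Q.comap (ofTensorCompl k R j)).comap
      (Algebra.TensorProduct.includeLeft : R →ₐ[k] R ⊗[k] (⨂[k] _ : {i // i ≠ j}, R)) := by
    rw [← ofTensorCompl_comp_includeLeft k R j] at hp
    exact hp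
  obtain ⟨P, hPQ, hP, hPj, hPi⟩ :=
    Algebra.TensorProduct.exists_prime_le_of_le_comap_includeLeft _ p hp'
  refine ⟨P.comap (toTensorCompl k R j), ?_, Ideal.comap_isPrime _ _, ?_, fun i hi => ?_⟩
  · calc P.comap (toTensorCompl k R j)
        _ ≤ (Q.comap (ofTensorCompl k R j)).comap (toTensorCompl k R j) := Ideal.comap_mono hPQ
        _ = Q := by
          change Q.comap ((ofTensorCompl k R j).comp (toTensorCompl k R j)) = Q
          rw [ofTensorCompl_comp_toTensorCompl]
          rfl
  · rw [← hPj, ← toTensorCompl_comp_singleAlgHom_self k R j]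
    rfl
  · change P.comap ((toTensorCompl k R j).comp (singleAlgHom i)) = _
    rw [toTensorCompl_comp_singleAlgHom_of_ne k R j hi,
      ← ofTensorCompl_comp_includeRight_comp_singleAlgHom k R j ⟨i, hi⟩]
    exact congrArg (Ideal.comap (singleAlgHom (A := fun _ => R) (⟨i, hi⟩ : {i // i ≠ j}))) hPi

theorem comap_singleAlgHom_mem_minimalPrimes {I : Ideal R} {Q : Ideal (⨂[k] _ : ι, R)}
    (hQ : Q ∈ (⨆ i, I.map (singleAlgHom (A := fun _ => R) i)).minimalPrimes) (j : ι) :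
    Q.comap (singleAlgHom (A := fun _ => R) j) ∈ I.minimalPrimes := by
  have : Q.IsPrime := hQ.1.1
  have hIQ : ∀ i, I ≤ Q.comap (singleAlgHom (A := fun _ => R) i) := fun i =>
    Ideal.map_le_iff_le_comap.mp ((le_iSup _ i).trans hQ.1.2)
  refine ⟨⟨Ideal.comap_isPrime _ _, hIQ j⟩, fun p ⟨hp, hIp⟩ hpQ => ?_⟩
  obtain ⟨P, hPQ, hP, hPj, hPi⟩ := exists_prime_le_of_le_comap_singleAlgHom Q j p hpQ
  have hIP : ⨆ i, I.map (singleAlgHom (A := fun _ => R) i) ≤ P := iSup_le fun i => by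
    rw [Ideal.map_le_iff_le_comap]
    rcases eq_or_ne i j with rfl | hi
    · exact hPj ▸ hIp
    · exact hPi i hi ▸ hIQ i
  rw [← hPj, le_antisymm hPQ (hQ.2 ⟨hP, hIP⟩ hPQ)]

theorem sum_le_height_comap_singleAlgHom (Q : PrimeSpectrum (⨂[k] _ : ι, R)) (c : ι → ℕ)
    (hc : ∀ i, (c i : ℕ∞) ≤
      Order.height (PrimeSpectrum.comap (singleAlgHom (R := k) (A := fun _ => R) i).toRingHom Q)) :
    ((∑ i, c i : ℕ) : ℕ∞) ≤ Order.height Q := by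
  refine Order.sum_le_height_of_going_down
    (fun i => PrimeSpectrum.comap (singleAlgHom (R := k) (A := fun _ => R) i).toRingHom)
    ?_ c Q hc
  intro Q j p hp
  obtain ⟨P, hPQ, hP, hPj, hPi⟩ :=
    exists_prime_le_of_le_comap_singleAlgHom Q.asIdeal j p.asIdeal hp.le
  refine ⟨⟨P, hP⟩, lt_of_le_of_ne hPQ ?_, PrimeSpectrum.ext hPj,
    fun i hi => PrimeSpectrum.ext (hPi i hi)⟩
  rintro rfl
  exact hp.ne (PrimeSpectrum.ext hPj.symm)

end GoingDown

end PiTensorProduct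

theorem codim_of_power_of_pair_general
    (k R : Type) [Field k] [CommRing R] [Algebra k R]
    (d n : ℕ) (I : Ideal R)
    (hI : ∀ P, ∀ hP : P ∈ I.minimalPrimes,
      (n : ℕ∞) ≤ Order.height (⟨P, hP.1.1⟩ : PrimeSpectrum R)) :
    ∀ Q, ∀ hQ : Q ∈ (⨆ i : Fin d,
        Ideal.map (PiTensorProduct.singleAlgHom (R := k) (A := fun _ : Fin d => R) i) I).minimalPrimes,
      (n * d : ℕ∞) ≤
        Order.height (⟨Q, hQ.1.1⟩ : PrimeSpectrum (PiTensorProduct k (fun _ : Fin d => R))) := by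
  intro Q hQ
  have h := PiTensorProduct.sum_le_height_comap_singleAlgHom ⟨Q, hQ.1.1⟩ (fun _ => n)
    fun i => hI _ (PiTensorProduct.comap_singleAlgHom_mem_minimalPrimes hQ i)
  simpa [mul_comm] using h

/-- Let `W` be a finite étale scheme of degree `d` over `k` and `(X, Z)` a pair
with `Z ⊆ X` closed of codimension `≥ n`.  Then `Z^W` has codimension `≥ nd` in the scheme of
`W`-points `X^W`.  Affine form, after splitting `W` (any étale scheme splits over a separable
closure, `X^W` becoming the `d`-fold product `X^d` and `Z^W` becoming `Z^d`): `X = Spec R`,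
`X^d = Spec (R^{⊗d})`, `Z = V(I)`, `Z^d = V(Σᵢ ιᵢ(I))`, and codimension is the height of
minimal primes. -/
theorem codim_of_power_of_pair
    (k R : Type) [Field k] [CommRing R] [IsDomain R] [Algebra k R] [Algebra.FiniteType k R]
    (d n : ℕ) (I : Ideal R) (hIne : I ≠ ⊤)
    (hI : ∀ P, ∀ hP : P ∈ I.minimalPrimes,
      (n : ℕ∞) ≤ Order.height (⟨P, hP.1.1⟩ : PrimeSpectrum R)) :
    ∀ Q, ∀ hQ : Q ∈ (⨆ i : Fin d,
        Ideal.map (PiTensorProduct.singleAlgHom (R := k) (A := fun _ : Fin d => R) i) I).minimalPrimes,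
      (n * d : ℕ∞) ≤
        Order.height (⟨Q, hQ.1.1⟩ : PrimeSpectrum (PiTensorProduct k (fun _ : Fin d => R))) :=
  codim_of_power_of_pair_general k R d n I hI
end
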